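/- Let x < y < z be consecutive elements of V̄_ℓ for some integer ℓ ≥ 3. Then y ∉ V̄_{ℓ+1} if and only if y − x ≠ z − y. When these equivalent conditions hold, one also has z − x = ᾱ(y) = F_ℓ. -/
import Mathlib


noncomputable section

/-- `F i` is the Fibonacci number `F_i` of the paper (`F_0 = 1`, `F_1 = 1`, `F_2 = 2`, ...). -/
def F (i : ℕ) : ℕ := Nat.fib (i + 1)

/-- `x` belongs to the set `F̄ = {0,1,2,3,5,8,...}` of all Fibonacci numbers (including `0`). -/
def IsFib (x : ℕ) : Prop := ∃ i : ℕ, Nat.fib i = x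

open scoped Classical in
/-- The map `ῑ : ℕ → ℕ`: `ῑ(x) = x` if `x ∈ F̄`, and `ῑ(x) = x - 2 F_{i-2}`
if `F_i < x < F_{i+1}` for the (unique) integer `i ≥ 3`. -/
noncomputable def iotaBar (x : ℕ) : ℕ :=
  if IsFib x then x
  else x - 2 * F (sInf {i : ℕ | x < F (i + 1)} - 2)

/-- `ᾱ(x)` is the eventual constant value of the iterates of `ῑ` at `x`
(the iterates stabilize after at most `x` steps). -/
noncomputable def alphaBar (x : ℕ) : ℕ := iotaBar^[x] x

/-- `V̄_ℓ = {x ∈ ℕ : ᾱ(x) ≥ F_ℓ}`. -/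
def VBar (ℓ : ℕ) : Set ℕ := {x : ℕ | F ℓ ≤ alphaBar x}

/-- `x < y` are consecutive elements of `S`. -/
def ConsecIn (S : Set ℕ) (x y : ℕ) : Prop :=
  x ∈ S ∧ y ∈ S ∧ x < y ∧ ∀ z ∈ S, ¬(x < z ∧ z < y)

-- Part 0 : F basics
lemma F_add_two (n : ℕ) : F (n + 2) = F (n + 1) + F n := by
  show Nat.fib (n + 1 + 2) = _
  rw [Nat.fib_add_two]; simp [F]; omega

lemma F_pos (n : ℕ) : 0 < F n := by
  simp [F]

lemma F_mono : Monotone F := fun a b h => Nat.fib_mono (by omega)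

lemma F_lt_F {i j : ℕ} (h1 : 1 ≤ i) (h2 : i < j) : F i < F j :=
  lt_of_lt_of_le (Nat.fib_lt_fib_succ (by omega)) (Nat.fib_mono (by omega))

lemma le_F (n : ℕ) : n ≤ F n := by
  induction n with
  | zero => simp [F]
  | succ n ih =>
    rcases n with _ | m
    · simp [F]
    · rw [F_add_two]; have h1 := F_pos m; have h2 := ih; omega

lemma isFib_F (i : ℕ) : IsFib (F i) := ⟨i + 1, rfl⟩

lemma not_isFib {i x : ℕ} (hi : 1 ≤ i) (h1 : F i < x) (h2 : x < F (i + 1)) : ¬ IsFib x := by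
  rintro ⟨j, rfl⟩
  rcases le_or_gt j (i + 1) with h | h
  · have := Nat.fib_mono h
    simp only [F] at h1; omega
  · have := Nat.fib_mono (show i + 2 ≤ j by omega)
    simp only [F, show i+1+1 = i+2 from rfl] at h2; omega

-- Part 1 : iota / alpha basics
lemma sInf_between {i x : ℕ} (hi : 1 ≤ i) (h1 : F i < x) (h2 : x < F (i + 1)) :
    sInf {j : ℕ | x < F (j + 1)} = i := by
  have hmem : i ∈ {j : ℕ | x < F (j + 1)} := h2
  refine le_antisymm (Nat.sInf_le hmem) (le_csInf ⟨i, hmem⟩ ?_)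
  intro j hj
  by_contra hji
  push_neg at hji
  have : F (j + 1) ≤ F i := F_mono (by omega)
  have hx : x < F (j+1) := hj
  omega

lemma iota_fib {x : ℕ} (h : IsFib x) : iotaBar x = x := by
  simp [iotaBar, h]

lemma iota_between {j x : ℕ} (h1 : F (j + 3) < x) (h2 : x < F (j + 4)) :
    iotaBar x = x - 2 * F (j + 1) := by
  have e34 : j + 3 + 1 = j + 4 := rfl
  have hnf : ¬ IsFib x := not_isFib (by omega) h1 (by rw [e34]; exact h2)
  rw [iotaBar, if_neg hnf]
  have hs := sInf_between (i := j + 3) (by omega) h1 (by rw [e34]; exact h2)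
  rw [hs, show j + 3 - 2 = j + 1 from by omega]

lemma isFib_small {x : ℕ} (h : x ≤ 3) : IsFib x := by
  interval_cases x
  · exact ⟨0, rfl⟩
  · exact ⟨1, rfl⟩
  · exact ⟨3, rfl⟩
  · exact ⟨4, rfl⟩

lemma existsBetweenF {x : ℕ} (h : ¬ IsFib x) : ∃ j, F (j + 3) < x ∧ x < F (j + 4) := by
  have hx4 : 4 ≤ x := by
    by_contra hc
    exact h (isFib_small (by omega))
  -- the set of j with x < F (j + 4) is nonempty
  have hne : ∃ j, x < F (j + 4) := by
    refine ⟨x, ?_⟩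
    have h1 := le_F (x + 1)
    have h2 : F (x + 1) ≤ F (x + 4) := F_mono (by omega)
    omega
  classical
  let j0 := Nat.find hne
  have hj0 : x < F (j0 + 4) := Nat.find_spec hne
  refine ⟨j0, ?_, hj0⟩
  rcases Nat.eq_zero_or_pos j0 with h0 | h0
  · have h3 : F (0 + 3) = 3 := rfl
    rw [h0]; omega
  · have hmin : ¬ x < F (j0 - 1 + 4) := Nat.find_min hne (by omega)
    have : F (j0 - 1 + 4) = F (j0 + 3) := by congr 1; omega
    rw [this] at hmin
    push_neg at hmin
    rcases Nat.lt_or_ge (F (j0 + 3)) x with h' | h'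
    · exact h'
    · have hx : x = F (j0 + 3) := le_antisymm h' hmin
      exact absurd (by rw [hx]; exact isFib_F _) h

lemma iota_lt {x : ℕ} (h : ¬ IsFib x) : iotaBar x < x ∧ 0 < iotaBar x := by
  obtain ⟨j, h1, h2⟩ := existsBetweenF h
  rw [iota_between h1 h2]
  have e3 : F (j + 3) = F (j + 2) + F (j + 1) := F_add_two (j + 1)
  have e2 : F (j + 2) = F (j + 1) + F j := F_add_two j
  have p1 := F_pos (j + 1)
  have p0 := F_pos j
  omega

lemma iter_eq_alpha : ∀ x n : ℕ, x ≤ n → iotaBar^[n] x = alphaBar x := by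
  intro x
  induction x using Nat.strong_induction_on with
  | _ x IH =>
    intro n hn
    by_cases h : IsFib x
    · have hfix : iotaBar x = x := iota_fib h
      rw [alphaBar, Function.iterate_fixed hfix, Function.iterate_fixed hfix]
    · obtain ⟨hlt, hpos⟩ := iota_lt h
      have hx1 : 1 ≤ x := by
        by_contra hc
        exact h (isFib_small (by omega))
      obtain ⟨n', rfl⟩ : ∃ n', n = n' + 1 := ⟨n - 1, by omega⟩
      rw [Function.iterate_succ_apply]
      rw [IH (iotaBar x) hlt n' (by omega)]
      have e : x - 1 + 1 = x := by omega
      have hx : alphaBar x = iotaBar^[x - 1] (iotaBar x) := by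
        conv_lhs => rw [alphaBar, ← e, Function.iterate_succ_apply, e]
      rw [hx, IH (iotaBar x) hlt (x - 1) (by omega)]

lemma alpha_iota (x : ℕ) : alphaBar (iotaBar x) = alphaBar x := by
  by_cases h : IsFib x
  · rw [iota_fib h]
  · obtain ⟨hlt, _⟩ := iota_lt h
    have hx1 : 1 ≤ x := by
      by_contra hc; exact h (isFib_small (by omega))
    have e : x - 1 + 1 = x := by omega
    have hx : alphaBar x = iotaBar^[x - 1] (iotaBar x) := by
      conv_lhs => rw [alphaBar, ← e, Function.iterate_succ_apply, e]
    rw [hx, iter_eq_alpha (iotaBar x) (x - 1) (by omega)]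

lemma alpha_fib {x : ℕ} (h : IsFib x) : alphaBar x = x := by
  rw [alphaBar, Function.iterate_fixed (iota_fib h)]

lemma alpha_F (i : ℕ) : alphaBar (F i) = F i := alpha_fib (isFib_F i)

lemma alpha_le (x : ℕ) : alphaBar x ≤ x := by
  induction x using Nat.strong_induction_on with
  | _ x IH =>
    by_cases h : IsFib x
    · rw [alpha_fib h]
    · obtain ⟨hlt, _⟩ := iota_lt h
      rw [← alpha_iota x]
      exact le_trans (IH _ hlt) (le_of_lt hlt)

lemma alpha_between {j x : ℕ} (h1 : F (j + 3) < x) (h2 : x < F (j + 4)) :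
    alphaBar x = alphaBar (x - 2 * F (j + 1)) := by
  rw [← alpha_iota x, iota_between h1 h2]

lemma VBar_between {j x m : ℕ} (h1 : F (j + 3) < x) (h2 : x < F (j + 4)) :
    x ∈ VBar m ↔ x - 2 * F (j + 1) ∈ VBar m := by
  unfold VBar
  rw [Set.mem_setOf_eq, Set.mem_setOf_eq, alpha_between h1 h2]

lemma mem_VBar {m x : ℕ} : x ∈ VBar m ↔ F m ≤ alphaBar x := Iff.rfl

lemma F_mem_VBar {m i : ℕ} (h : m ≤ i) : F i ∈ VBar m := by
  rw [mem_VBar, alpha_F]; exact F_mono h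

lemma VBar_lower {m x : ℕ} (h : x ∈ VBar m) : F m ≤ x :=
  le_trans h (alpha_le x)
-- Part 2 : special alpha values and base interval lemmas
lemma alpha_F2F (i : ℕ) : alphaBar (F (i + 3) + F (i + 1)) = F (i + 2) := by
  have e3 : F (i + 3) = F (i + 2) + F (i + 1) := F_add_two (i + 1)
  have e4 : F (i + 4) = F (i + 3) + F (i + 2) := F_add_two (i + 2)
  have hlt : F (i + 1) < F (i + 2) := F_lt_F (by omega) (by omega)
  have p1 := F_pos (i + 1)
  have ha : alphaBar (F (i + 3) + F (i + 1)) = alphaBar (F (i + 3) + F (i + 1) - 2 * F (i + 1)) :=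
    alpha_between (show F (i + 3) < F (i + 3) + F (i + 1) by omega)
      (show F (i + 3) + F (i + 1) < F (i + 4) by omega)
  rw [ha, show F (i + 3) + F (i + 1) - 2 * F (i + 1) = F (i + 2) by omega, alpha_F]

lemma alpha_w2 (k : ℕ) : alphaBar (F (k + 5) + F (k + 1)) = F (k + 3) := by
  have e2 : F (k + 2) = F (k + 1) + F k := F_add_two k
  have e3 : F (k + 3) = F (k + 2) + F (k + 1) := F_add_two (k + 1)
  have e4 : F (k + 4) = F (k + 3) + F (k + 2) := F_add_two (k + 2)
  have e5 : F (k + 5) = F (k + 4) + F (k + 3) := F_add_two (k + 3)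
  have e6 : F (k + 6) = F (k + 5) + F (k + 4) := F_add_two (k + 4)
  have p1 := F_pos k
  have m0 : F k ≤ F (k + 1) := F_mono (by omega)
  have ha : alphaBar (F (k + 5) + F (k + 1)) = alphaBar (F (k + 5) + F (k + 1) - 2 * F (k + 3)) :=
    alpha_between (show F (k + 5) < F (k + 5) + F (k + 1) by omega)
      (show F (k + 5) + F (k + 1) < F (k + 6) by omega)
  rw [ha, show F (k + 5) + F (k + 1) - 2 * F (k + 3) = F (k + 3) by omega, alpha_F]

lemma B1 {k x : ℕ} (h1 : F (k + 3) < x) (h2 : x < F (k + 4)) : alphaBar x < F (k + 3) := by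
  have ha := alpha_between (j := k) h1 h2
  have hle := alpha_le (x - 2 * F (k + 1))
  have e2 : F (k + 2) = F (k + 1) + F k := F_add_two k
  have e3 : F (k + 3) = F (k + 2) + F (k + 1) := F_add_two (k + 1)
  have e4 : F (k + 4) = F (k + 3) + F (k + 2) := F_add_two (k + 2)
  have p0 := F_pos k
  have m0 : F k ≤ F (k + 1) := F_mono (by omega)
  omega

lemma B2 {k x : ℕ} (h1 : F (k + 4) < x) (h2 : x < F (k + 5)) :
    (x = F (k + 4) + F (k + 2) ∧ alphaBar x = F (k + 3)) ∨ alphaBar x < F (k + 3) := by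
  have ha : alphaBar x = alphaBar (x - 2 * F (k + 2)) := alpha_between h1 h2
  have e2 : F (k + 2) = F (k + 1) + F k := F_add_two k
  have e3 : F (k + 3) = F (k + 2) + F (k + 1) := F_add_two (k + 1)
  have e4 : F (k + 4) = F (k + 3) + F (k + 2) := F_add_two (k + 2)
  have e5 : F (k + 5) = F (k + 4) + F (k + 3) := F_add_two (k + 3)
  have p0 := F_pos k
  have m0 : F k ≤ F (k + 1) := F_mono (by omega)
  rcases Nat.lt_trichotomy (x - 2 * F (k + 2)) (F (k + 3)) with h | h | h
  · right; have := alpha_le (x - 2 * F (k + 2)); omega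
  · left
    refine ⟨by omega, ?_⟩
    rw [ha, h, alpha_F]
  · right
    have hub : x - 2 * F (k + 2) < F (k + 4) := by omega
    have := B1 h hub
    omega

lemma B3 {k x : ℕ} (h1 : F (k + 5) < x) (h2 : x < F (k + 6)) :
    (x = F (k + 5) + F (k + 1) ∧ alphaBar x = F (k + 3)) ∨
    (x = F (k + 5) + F (k + 3) ∧ alphaBar x = F (k + 4)) ∨ alphaBar x < F (k + 3) := by
  have ha : alphaBar x = alphaBar (x - 2 * F (k + 3)) := alpha_between h1 h2
  have e2 : F (k + 2) = F (k + 1) + F k := F_add_two k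
  have e3 : F (k + 3) = F (k + 2) + F (k + 1) := F_add_two (k + 1)
  have e4 : F (k + 4) = F (k + 3) + F (k + 2) := F_add_two (k + 2)
  have e5 : F (k + 5) = F (k + 4) + F (k + 3) := F_add_two (k + 3)
  have e6 : F (k + 6) = F (k + 5) + F (k + 4) := F_add_two (k + 4)
  have p0 := F_pos k
  have m0 : F k ≤ F (k + 1) := F_mono (by omega)
  set x' := x - 2 * F (k + 3) with hx'
  rcases Nat.lt_trichotomy x' (F (k + 3)) with h | h | h
  · right; right; have := alpha_le x'; omega
  · left
    refine ⟨by omega, ?_⟩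
    rw [ha, h, alpha_F]
  · rcases Nat.lt_trichotomy x' (F (k + 4)) with h' | h' | h'
    · right; right
      have := B1 h h'
      omega
    · right; left
      refine ⟨by omega, ?_⟩
      rw [ha, h', alpha_F]
    · -- F (k+4) < x' < F (k+4) + F (k+2), use B2
      have hub : x' < F (k + 5) := by omega
      rcases B2 h' hub with ⟨hx, _⟩ | hlt
      · -- x' = F (k+4) + F (k+2) impossible since x' ≤ F(k+6)-1-2F(k+3)
        omega
      · right; right; omega
-- Part 3 : ConsecIn helpers and shift machinery
lemma pred_ge {S : Set ℕ} {x b w : ℕ} (h : ConsecIn S x b) (hw : w ∈ S) (hwb : w < b) : w ≤ x := by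
  by_contra hc
  exact h.2.2.2 w hw ⟨by omega, hwb⟩

lemma succ_le {S : Set ℕ} {a z w : ℕ} (h : ConsecIn S a z) (hw : w ∈ S) (haw : a < w) : z ≤ w := by
  by_contra hc
  exact h.2.2.2 w hw ⟨haw, by omega⟩

lemma mem_w1 (k : ℕ) : F (k + 4) + F (k + 2) ∈ VBar (k + 3) := by
  rw [mem_VBar]
  have := alpha_F2F (k + 1)
  rw [show k + 1 + 3 = k + 4 from rfl, show k + 1 + 1 = k + 2 from rfl,
    show k + 1 + 2 = k + 3 from rfl] at this
  omega

lemma mem_w2 (k : ℕ) : F (k + 5) + F (k + 1) ∈ VBar (k + 3) := by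
  rw [mem_VBar, alpha_w2]

lemma mem_w3 (k : ℕ) : F (k + 5) + F (k + 3) ∈ VBar (k + 3) := by
  rw [mem_VBar]
  have := alpha_F2F (k + 2)
  rw [show k + 2 + 3 = k + 5 from rfl, show k + 2 + 1 = k + 3 from rfl,
    show k + 2 + 2 = k + 4 from rfl] at this
  rw [this]
  exact F_mono (by omega)

lemma alpha_w3 (k : ℕ) : alphaBar (F (k + 5) + F (k + 3)) = F (k + 4) := by
  have := alpha_F2F (k + 2)
  rw [show k + 2 + 3 = k + 5 from rfl, show k + 2 + 1 = k + 3 from rfl,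
    show k + 2 + 2 = k + 4 from rfl] at this
  exact this

lemma alpha_w1 (k : ℕ) : alphaBar (F (k + 4) + F (k + 2)) = F (k + 3) := by
  have := alpha_F2F (k + 1)
  rw [show k + 1 + 3 = k + 4 from rfl, show k + 1 + 1 = k + 2 from rfl,
    show k + 1 + 2 = k + 3 from rfl] at this
  exact this

lemma mem_shift {k j : ℕ} (hj : k + 3 ≤ j) {w : ℕ} (h1 : F (j + 3) ≤ w) (h2 : w ≤ F (j + 4)) :
    (w ∈ VBar (k + 3) ↔ w - 2 * F (j + 1) ∈ VBar (k + 3)) := by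
  have e2 : F (j + 2) = F (j + 1) + F j := F_add_two j
  have e3 : F (j + 3) = F (j + 2) + F (j + 1) := F_add_two (j + 1)
  have e4 : F (j + 4) = F (j + 3) + F (j + 2) := F_add_two (j + 2)
  rcases eq_or_lt_of_le h1 with he | hlt1
  · rw [← he, show F (j + 3) - 2 * F (j + 1) = F j by omega]
    exact iff_of_true (F_mem_VBar (by omega)) (F_mem_VBar (by omega))
  rcases eq_or_lt_of_le h2 with he2 | hlt2
  · rw [he2, show F (j + 4) - 2 * F (j + 1) = F (j + 2) + F j by omega]
    refine iff_of_true (F_mem_VBar (by omega)) ?_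
    obtain ⟨j', rfl⟩ : ∃ j', j = j' + 1 := ⟨j - 1, by omega⟩
    rw [mem_VBar]
    have := alpha_F2F j'
    rw [show j' + 3 = j' + 1 + 2 from rfl] at this
    rw [this]
    exact F_mono (by omega)
  · exact VBar_between hlt1 hlt2

lemma consec_shift {k j : ℕ} (hj : k + 3 ≤ j) {a b : ℕ} (hab : ConsecIn (VBar (k + 3)) a b)
    (ha : F (j + 3) ≤ a) (hb : b ≤ F (j + 4)) :
    ConsecIn (VBar (k + 3)) (a - 2 * F (j + 1)) (b - 2 * F (j + 1)) := by
  obtain ⟨haS, hbS, hord, hbet⟩ := hab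
  have e2 : F (j + 2) = F (j + 1) + F j := F_add_two j
  have e3 : F (j + 3) = F (j + 2) + F (j + 1) := F_add_two (j + 1)
  have p0 := F_pos j
  have hca : 2 * F (j + 1) ≤ F (j + 3) := by omega
  refine ⟨(mem_shift hj ha (by omega)).1 haS, (mem_shift hj (by omega) hb).1 hbS, by omega, ?_⟩
  rintro t htS ⟨h1, h2⟩
  have hw : t + 2 * F (j + 1) ∈ VBar (k + 3) := by
    refine (mem_shift hj (w := t + 2 * F (j + 1)) (by omega) (by omega)).2 ?_
    simpa using htS
  exact hbet (t + 2 * F (j + 1)) hw ⟨by omega, by omega⟩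

section SmallCases
variable {k : ℕ}

lemma succ3 {z : ℕ} (h : ConsecIn (VBar (k + 3)) (F (k + 3)) z) : z = F (k + 4) := by
  have hzS := h.2.1
  have hord := h.2.2.1
  have hle : z ≤ F (k + 4) := succ_le h (F_mem_VBar (by omega)) (F_lt_F (by omega) (by omega))
  rcases eq_or_lt_of_le hle with he | hlt
  · exact he
  · exact absurd (B1 hord hlt) (by rw [mem_VBar] at hzS; omega)

lemma succ4 {z : ℕ} (h : ConsecIn (VBar (k + 3)) (F (k + 4)) z) : z = F (k + 4) + F (k + 2) := by
  have hzS := h.2.1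
  have hord := h.2.2.1
  have p2 := F_pos (k + 2)
  have hle : z ≤ F (k + 4) + F (k + 2) := succ_le h (mem_w1 k) (by omega)
  have e4 : F (k + 5) = F (k + 4) + F (k + 3) := F_add_two (k + 3)
  have m23 : F (k + 2) < F (k + 3) := F_lt_F (by omega) (by omega)
  rcases eq_or_lt_of_le hle with he | hlt
  · exact he
  · rcases B2 hord (by omega) with ⟨he, _⟩ | hlt2
    · omega
    · exact absurd hlt2 (by rw [mem_VBar] at hzS; omega)

lemma succ5 {z : ℕ} (h : ConsecIn (VBar (k + 3)) (F (k + 5)) z) : z = F (k + 5) + F (k + 1) := by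
  have hzS := h.2.1
  have hord := h.2.2.1
  have p1 := F_pos (k + 1)
  have hle : z ≤ F (k + 5) + F (k + 1) := succ_le h (mem_w2 k) (by omega)
  have e5 : F (k + 6) = F (k + 5) + F (k + 4) := F_add_two (k + 4)
  have m14 : F (k + 1) < F (k + 4) := F_lt_F (by omega) (by omega)
  have m13 : F (k + 1) < F (k + 3) := F_lt_F (by omega) (by omega)
  rcases eq_or_lt_of_le hle with he | hlt
  · exact he
  · rcases B3 hord (by omega) with ⟨he, _⟩ | ⟨he, _⟩ | hlt2
    · omega
    · omega
    · exact absurd hlt2 (by rw [mem_VBar] at hzS; omega)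

lemma pred4 {x : ℕ} (h : ConsecIn (VBar (k + 3)) x (F (k + 4))) : x = F (k + 3) := by
  have hxS := h.1
  have hord := h.2.2.1
  have hge : F (k + 3) ≤ x := pred_ge h (F_mem_VBar (by omega)) (F_lt_F (by omega) (by omega))
  rcases eq_or_lt_of_le hge with he | hlt
  · exact he.symm
  · exact absurd (B1 hlt hord) (by rw [mem_VBar] at hxS; omega)

lemma pred5 {x : ℕ} (h : ConsecIn (VBar (k + 3)) x (F (k + 5))) : x = F (k + 4) + F (k + 2) := by
  have hxS := h.1
  have hord := h.2.2.1
  have p2 := F_pos (k + 2)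
  have e4 : F (k + 5) = F (k + 4) + F (k + 3) := F_add_two (k + 3)
  have m23 : F (k + 2) < F (k + 3) := F_lt_F (by omega) (by omega)
  have hge : F (k + 4) ≤ x := pred_ge h (F_mem_VBar (by omega)) (by omega)
  rcases eq_or_lt_of_le hge with he | hlt
  · exact absurd (h.2.2.2 (F (k + 4) + F (k + 2)) (mem_w1 k) ⟨by omega, by omega⟩) (fun c => c)
  · rcases B2 hlt hord with ⟨he, _⟩ | hlt2
    · exact he
    · exact absurd hlt2 (by rw [mem_VBar] at hxS; omega)

lemma pred6 {x : ℕ} (h : ConsecIn (VBar (k + 3)) x (F (k + 6))) : x = F (k + 5) + F (k + 3) := by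
  have hxS := h.1
  have hord := h.2.2.1
  have p1 := F_pos (k + 1)
  have p3 := F_pos (k + 3)
  have e5 : F (k + 6) = F (k + 5) + F (k + 4) := F_add_two (k + 4)
  have m14 : F (k + 1) < F (k + 4) := F_lt_F (by omega) (by omega)
  have m34 : F (k + 3) < F (k + 4) := F_lt_F (by omega) (by omega)
  have m13 : F (k + 1) < F (k + 3) := F_lt_F (by omega) (by omega)
  have hge : F (k + 5) ≤ x := pred_ge h (F_mem_VBar (by omega)) (by omega)
  rcases eq_or_lt_of_le hge with he | hlt
  · exact absurd (h.2.2.2 (F (k + 5) + F (k + 1)) (mem_w2 k) ⟨by omega, by omega⟩) (fun c => c)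
  · rcases B3 hlt hord with ⟨he, _⟩ | ⟨he, _⟩ | hlt2
    · exact absurd (h.2.2.2 (F (k + 5) + F (k + 3)) (mem_w3 k) ⟨by omega, by omega⟩) (fun c => c)
    · exact he
    · exact absurd hlt2 (by rw [mem_VBar] at hxS; omega)

end SmallCases
-- Part 4 : symmetry of gaps around Fibonacci points
lemma sym (k : ℕ) : ∀ i, k + 4 ≤ i → ∀ x z, ConsecIn (VBar (k + 3)) x (F i) →
    ConsecIn (VBar (k + 3)) (F i) z → F i - x = z - F i := by
  intro i
  induction i using Nat.strong_induction_on with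
  | _ i IH =>
    intro hi x z hx hz
    have e2 : F (k + 2) = F (k + 1) + F k := F_add_two k
    have e3 : F (k + 3) = F (k + 2) + F (k + 1) := F_add_two (k + 1)
    have e4 : F (k + 4) = F (k + 3) + F (k + 2) := F_add_two (k + 2)
    have e5 : F (k + 5) = F (k + 4) + F (k + 3) := F_add_two (k + 3)
    have e6 : F (k + 6) = F (k + 5) + F (k + 4) := F_add_two (k + 4)
    have e7 : F (k + 7) = F (k + 6) + F (k + 5) := F_add_two (k + 5)
    have e8 : F (k + 8) = F (k + 7) + F (k + 6) := F_add_two (k + 6)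
    have p0 := F_pos k
    have p1 := F_pos (k + 1)
    have m01 : F k ≤ F (k + 1) := F_mono (by omega)
    have m13 : F (k + 1) < F (k + 3) := F_lt_F (by omega) (by omega)
    rcases (show i = k + 4 ∨ i = k + 5 ∨ i = k + 6 ∨ i = k + 7 ∨ k + 8 ≤ i by omega)
      with h | h | h | h | h
    · subst h
      have h1 := pred4 hx
      have h2 := succ4 hz
      omega
    · subst h
      have h1 := pred5 hx
      have h2 := succ5 hz
      omega
    · subst h
      have h1 := pred6 hx
      -- succ : shift [F (k+6), F (k+7)] with j = k+3
      have hble : z ≤ F (k + 7) := succ_le hz (F_mem_VBar (by omega)) (F_lt_F (by omega) (by omega))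
      have hz' : ConsecIn (VBar (k + 3)) (F (k + 6) - 2 * F (k + 4)) (z - 2 * F (k + 4)) :=
        consec_shift (by omega) hz (le_refl _) hble
      rw [show F (k + 6) - 2 * F (k + 4) = F (k + 3) by omega] at hz'
      have h2 := succ3 hz'
      omega
    · subst h
      -- pred : shift [F (k+6), F (k+7)] with j = k+3
      have hage : F (k + 6) ≤ x := pred_ge hx (F_mem_VBar (by omega)) (F_lt_F (by omega) (by omega))
      have hx1 : ConsecIn (VBar (k + 3)) (x - 2 * F (k + 4)) (F (k + 7) - 2 * F (k + 4)) :=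
        consec_shift (by omega) hx hage (le_refl _)
      rw [show F (k + 7) - 2 * F (k + 4) = F (k + 5) + F (k + 3) by omega] at hx1
      -- determine pred of F (k+5) + F (k+3)
      have hxS' := hx1.1
      have hord' := hx1.2.2.1
      have hge5 : F (k + 5) ≤ x - 2 * F (k + 4) :=
        pred_ge hx1 (F_mem_VBar (by omega)) (by omega)
      have hxv : x - 2 * F (k + 4) = F (k + 5) + F (k + 1) := by
        rcases eq_or_lt_of_le hge5 with he | hlt
        · exact absurd (hx1.2.2.2 (F (k + 5) + F (k + 1)) (mem_w2 k) ⟨by omega, by omega⟩)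
            (fun c => c)
        · rcases B3 hlt (by omega) with ⟨he, _⟩ | ⟨he, _⟩ | hlt2
          · exact he
          · omega
          · exact absurd hlt2 (by rw [mem_VBar] at hxS'; omega)
      -- succ : shift [F (k+7), F (k+8)] with j = k+4
      have hble : z ≤ F (k + 8) := succ_le hz (F_mem_VBar (by omega)) (F_lt_F (by omega) (by omega))
      have hz' : ConsecIn (VBar (k + 3)) (F (k + 7) - 2 * F (k + 5)) (z - 2 * F (k + 5)) :=
        consec_shift (by omega) hz (le_refl _) hble
      rw [show F (k + 7) - 2 * F (k + 5) = F (k + 4) by omega] at hz'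
      have h2 := succ4 hz'
      omega
    · -- inductive step
      obtain ⟨n, rfl⟩ : ∃ n, i = n + 8 := ⟨i - 8, by omega⟩
      have hnk : k ≤ n := by omega
      have f4 : F (n + 4) = F (n + 3) + F (n + 2) := F_add_two (n + 2)
      have f5 : F (n + 5) = F (n + 4) + F (n + 3) := F_add_two (n + 3)
      have f6 : F (n + 6) = F (n + 5) + F (n + 4) := F_add_two (n + 4)
      have f7 : F (n + 7) = F (n + 6) + F (n + 5) := F_add_two (n + 5)
      have f8 : F (n + 8) = F (n + 7) + F (n + 6) := F_add_two (n + 6)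
      have f9 : F (n + 9) = F (n + 8) + F (n + 7) := F_add_two (n + 7)
      have q4 := F_pos (n + 4)
      have q5 := F_pos (n + 5)
      have pk3 := F_pos (k + 3)
      -- succ part : shift [F (n+8), F (n+9)] with j = n+5
      have hble : z ≤ F (n + 9) := succ_le hz (F_mem_VBar (by omega)) (F_lt_F (by omega) (by omega))
      have hz' : ConsecIn (VBar (k + 3)) (F (n + 8) - 2 * F (n + 6)) (z - 2 * F (n + 6)) :=
        consec_shift (by omega) hz (le_refl _) hble
      rw [show F (n + 8) - 2 * F (n + 6) = F (n + 5) by omega] at hz'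
      -- pred part : shift [F (n+7), F (n+8)] with j = n+4, then [F (n+6), F (n+7)] with j = n+3
      have hage : F (n + 7) ≤ x := pred_ge hx (F_mem_VBar (by omega)) (F_lt_F (by omega) (by omega))
      have hx1 : ConsecIn (VBar (k + 3)) (x - 2 * F (n + 5)) (F (n + 8) - 2 * F (n + 5)) :=
        consec_shift (by omega) hx hage (le_refl _)
      rw [show F (n + 8) - 2 * F (n + 5) = F (n + 6) + F (n + 4) by omega] at hx1
      have hage2 : F (n + 6) ≤ x - 2 * F (n + 5) :=
        pred_ge hx1 (F_mem_VBar (by omega)) (by omega)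
      have hx2 : ConsecIn (VBar (k + 3)) (x - 2 * F (n + 5) - 2 * F (n + 4))
          (F (n + 6) + F (n + 4) - 2 * F (n + 4)) :=
        consec_shift (by omega) hx1 hage2 (show F (n + 6) + F (n + 4) ≤ F (n + 7) by omega)
      rw [show F (n + 6) + F (n + 4) - 2 * F (n + 4) = F (n + 5) by omega] at hx2
      have hIH := IH (n + 5) (by omega) (by omega) _ _ hx2 hz'
      have hxx := VBar_lower hx2.1
      have hzo := hz'.2.2.1
      have hxo := hx2.2.2.1
      have hxF := hx.2.2.1
      have hzF := hz.2.2.1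
      omega
-- Part 5 : main lemma and theorem
lemma main_aux (k : ℕ) : ∀ y x z, ConsecIn (VBar (k + 3)) x y → ConsecIn (VBar (k + 3)) y z →
    ((y ∉ VBar (k + 4)) ↔ y - x ≠ z - y) ∧
    ((y ∉ VBar (k + 4)) → z - x = F (k + 3) ∧ alphaBar y = F (k + 3)) := by
  intro y
  induction y using Nat.strong_induction_on with
  | _ y IH =>
    intro x z hxy hyz
    have e2 : F (k + 2) = F (k + 1) + F k := F_add_two k
    have e3 : F (k + 3) = F (k + 2) + F (k + 1) := F_add_two (k + 1)
    have e4 : F (k + 4) = F (k + 3) + F (k + 2) := F_add_two (k + 2)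
    have e5 : F (k + 5) = F (k + 4) + F (k + 3) := F_add_two (k + 3)
    have e6 : F (k + 6) = F (k + 5) + F (k + 4) := F_add_two (k + 4)
    have p0 := F_pos k
    have p1 := F_pos (k + 1)
    have m01 : F k ≤ F (k + 1) := F_mono (by omega)
    have m12 : F (k + 1) < F (k + 2) := F_lt_F (by omega) (by omega)
    have hxS := hxy.1
    have hyS := hxy.2.1
    have hzS := hyz.2.1
    have hxal : F (k + 3) ≤ x := VBar_lower hxS
    have hxly : x < y := hxy.2.2.1
    have hylz : y < z := hyz.2.2.1
    by_cases hfib : IsFib y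
    · -- y is a Fibonacci number
      obtain ⟨jj, hjj⟩ := hfib
      have hy4 : 4 ≤ y := by omega
      have hjj5 : 5 ≤ jj := by
        by_contra hc
        have hm : Nat.fib jj ≤ Nat.fib 4 := Nat.fib_mono (by omega)
        have he : Nat.fib 4 = 3 := rfl
        omega
      obtain ⟨i, rfl⟩ : ∃ i, jj = i + 1 := ⟨jj - 1, by omega⟩
      have hy : y = F i := hjj.symm
      have hik : k + 4 ≤ i := by
        by_contra hc
        have : F i ≤ F (k + 3) := F_mono (by omega)
        omega
      rw [hy] at hxy hyz
      have hsym := sym k i hik x z hxy hyz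
      have hyT : y ∈ VBar (k + 4) := by
        rw [hy, mem_VBar, alpha_F]
        exact F_mono (by omega)
      have hgap : y - x = z - y := by rw [hy]; omega
      exact ⟨⟨fun hne => absurd hyT hne, fun hne => absurd hgap hne⟩,
        fun hne => absurd hyT hne⟩
    · -- y is not Fibonacci
      obtain ⟨j0, h1, h2⟩ := existsBetweenF hfib
      have hyl : F (k + 3) ≤ y := VBar_lower hyS
      have hj0 : k ≤ j0 := by
        by_contra hc
        have : F (j0 + 4) ≤ F (k + 3) := F_mono (by omega)
        omega
      have hxge : F (j0 + 3) ≤ x := pred_ge hxy (F_mem_VBar (by omega)) h1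
      have hzle : z ≤ F (j0 + 4) := succ_le hyz (F_mem_VBar (by omega)) h2
      rcases (show k = j0 ∨ k + 1 = j0 ∨ k + 2 = j0 ∨ k + 3 ≤ j0 by omega) with rfl | h | h | h
      · -- interval (F (k+3), F (k+4)) is empty in VBar (k+3)
        exact absurd (B1 h1 h2) (by rw [mem_VBar] at hyS; omega)
      · -- interval (F (k+4), F (k+5))
        subst h
        have h1' : F (k + 4) < y := h1
        have h2' : y < F (k + 5) := h2
        have hxge' : F (k + 4) ≤ x := hxge
        have hzle' : z ≤ F (k + 5) := hzle
        have hyw : y = F (k + 4) + F (k + 2) ∧ alphaBar y = F (k + 3) := by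
          rcases B2 h1' h2' with hh | hh
          · exact hh
          · exact absurd hh (by rw [mem_VBar] at hyS; omega)
        have hxv : x = F (k + 4) := by
          rcases eq_or_lt_of_le hxge' with he | hlt
          · exact he.symm
          · rcases B2 hlt (by omega) with ⟨he, _⟩ | hh
            · omega
            · exact absurd hh (by rw [mem_VBar] at hxS; omega)
        have hzv : z = F (k + 5) := by
          rcases eq_or_lt_of_le hzle' with he | hlt
          · exact he
          · rcases B2 (by omega) hlt with ⟨he, _⟩ | hh
            · omega
            · exact absurd hh (by rw [mem_VBar] at hzS; omega)
        have hyT : y ∉ VBar (k + 4) := by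
          rw [mem_VBar, hyw.2]
          have : F (k + 3) < F (k + 4) := F_lt_F (by omega) (by omega)
          omega
        refine ⟨⟨fun _ => by omega, fun _ => hyT⟩, fun _ => ⟨by omega, hyw.2⟩⟩
      · -- interval (F (k+5), F (k+6))
        subst h
        have h1' : F (k + 5) < y := h1
        have h2' : y < F (k + 6) := h2
        have hxge' : F (k + 5) ≤ x := hxge
        have hzle' : z ≤ F (k + 6) := hzle
        have m13 : F (k + 1) < F (k + 3) := F_lt_F (by omega) (by omega)
        have m34 : F (k + 3) < F (k + 4) := F_lt_F (by omega) (by omega)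
        rcases B3 h1' h2' with ⟨hyv, hya⟩ | ⟨hyv, hya⟩ | hh
        · -- y = F (k+5) + F (k+1), the asymmetric case
          have hxv : x = F (k + 5) := by
            rcases eq_or_lt_of_le hxge' with he | hlt
            · exact he.symm
            · rcases B3 hlt (by omega) with ⟨he, _⟩ | ⟨he, _⟩ | hh
              · omega
              · omega
              · exact absurd hh (by rw [mem_VBar] at hxS; omega)
          have hzu : z = F (k + 5) + F (k + 3) := by
            have hzle2 : z ≤ F (k + 5) + F (k + 3) :=
              succ_le (w := F (k + 5) + F (k + 3)) hyz (mem_w3 k) (by omega)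
            rcases eq_or_lt_of_le hzle2 with he | hlt
            · exact he
            · rcases B3 (k := k) (x := z) (by omega) (by omega) with ⟨he, _⟩ | ⟨he, _⟩ | hh
              · omega
              · omega
              · exact absurd hh (by rw [mem_VBar] at hzS; omega)
          have hyT : y ∉ VBar (k + 4) := by
            rw [mem_VBar, hya]; omega
          refine ⟨⟨fun _ => by omega, fun _ => hyT⟩, fun _ => ⟨by omega, hya⟩⟩
        · -- y = F (k+5) + F (k+3), the symmetric case
          have hxv : x = F (k + 5) + F (k + 1) := by
            rcases eq_or_lt_of_le hxge' with he | hlt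
            · exact absurd (hxy.2.2.2 (F (k + 5) + F (k + 1)) (mem_w2 k) ⟨by omega, by omega⟩)
                (fun c => c)
            · rcases B3 hlt (by omega) with ⟨he, _⟩ | ⟨he, _⟩ | hh
              · exact he
              · omega
              · exact absurd hh (by rw [mem_VBar] at hxS; omega)
          have hzv : z = F (k + 6) := by
            rcases eq_or_lt_of_le hzle' with he | hlt
            · exact he
            · rcases B3 (by omega) hlt with ⟨he, _⟩ | ⟨he, _⟩ | hh
              · omega
              · omega
              · exact absurd hh (by rw [mem_VBar] at hzS; omega)
          have hyT : y ∈ VBar (k + 4) := by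
            rw [mem_VBar, hya]
          have hgap : y - x = z - y := by omega
          exact ⟨⟨fun hne => absurd hyT hne, fun hne => absurd hgap hne⟩,
            fun hne => absurd hyT hne⟩
        · exact absurd hh (by rw [mem_VBar] at hyS; omega)
      · -- inductive step: shift down by 2 * F (j0 + 1)
        have g2 : F (j0 + 2) = F (j0 + 1) + F j0 := F_add_two j0
        have g3 : F (j0 + 3) = F (j0 + 2) + F (j0 + 1) := F_add_two (j0 + 1)
        have q0 := F_pos j0
        have q1 := F_pos (j0 + 1)
        have hxy' : ConsecIn (VBar (k + 3)) (x - 2 * F (j0 + 1)) (y - 2 * F (j0 + 1)) :=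
          consec_shift h hxy hxge (by omega)
        have hyz' : ConsecIn (VBar (k + 3)) (y - 2 * F (j0 + 1)) (z - 2 * F (j0 + 1)) :=
          consec_shift h hyz (by omega) hzle
        have hlt : y - 2 * F (j0 + 1) < y := by omega
        have hIH := IH (y - 2 * F (j0 + 1)) hlt (x - 2 * F (j0 + 1)) (z - 2 * F (j0 + 1)) hxy' hyz'
        have hyV : y ∈ VBar (k + 4) ↔ y - 2 * F (j0 + 1) ∈ VBar (k + 4) := VBar_between h1 h2
        have halpha : alphaBar y = alphaBar (y - 2 * F (j0 + 1)) := alpha_between h1 h2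
        have ea : y - 2 * F (j0 + 1) - (x - 2 * F (j0 + 1)) = y - x := by omega
        have eb : z - 2 * F (j0 + 1) - (y - 2 * F (j0 + 1)) = z - y := by omega
        have ec : z - 2 * F (j0 + 1) - (x - 2 * F (j0 + 1)) = z - x := by omega
        rw [ea, eb, ec, ← hyV, ← halpha] at hIH
        exact hIH

theorem VBar_middle_characterization (ℓ : ℕ) (hℓ : 3 ≤ ℓ) (x y z : ℕ)
    (hxy : ConsecIn (VBar ℓ) x y) (hyz : ConsecIn (VBar ℓ) y z) :
    (y ∉ VBar (ℓ + 1) ↔ y - x ≠ z - y) ∧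
    (y ∉ VBar (ℓ + 1) → z - x = F ℓ ∧ alphaBar y = F ℓ) := by
  obtain ⟨k, rfl⟩ : ∃ k, ℓ = k + 3 := ⟨ℓ - 3, by omega⟩
  exact main_aux k y x z hxy hyz
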